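/- Define the 8×8 real matrices J₁ = [[ρ, 0], [0, ρ]], J₂ = [[0, α], [α, 0]], J₃ = [[0, Ω], [Ω, 0]], where ρ = [[0, A], [A, 0]], α = [[A, 0], [0, −A]], Ω = [[0, I₂], [−I₂, 0]] are 4×4 matrices and A = [[0, −1], [1, 0]], and let η = [[0, I₄], [I₄, 0]]. For any real numbers a₁, a₂, a₃ with a₁² + a₂² + a₃² = 1, the linear combination 𝔸 = a₁J₁ + a₂J₂ + a₃J₃ satisfies 𝔸² = −I₈ and 𝔸ᵀ · η · 𝔸 = η; that is, there is a 2-sphere of generalized almost complex structures in the real span of {J₁, J₂, J₃}. -/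
import Mathlib


open Matrix

/-- The 2×2 block `A = [[0,−1],[1,0]]`. -/
def A2 : Matrix (Fin 2) (Fin 2) ℝ := !![0, -1; 1, 0]

/-- The complex structure `ρ = [[0,A],[A,0]]`. -/
def ρm : Matrix (Fin 2 ⊕ Fin 2) (Fin 2 ⊕ Fin 2) ℝ := Matrix.fromBlocks 0 A2 A2 0

/-- The matrix `α = [[A,0],[0,−A]]` of the 2-form `dp∧dq − dx∧dy`. -/
def αm : Matrix (Fin 2 ⊕ Fin 2) (Fin 2 ⊕ Fin 2) ℝ := Matrix.fromBlocks A2 0 0 (-A2)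

/-- The matrix `Ω = [[0,I₂],[−I₂,0]]` of the canonical symplectic form. -/
def Ωm : Matrix (Fin 2 ⊕ Fin 2) (Fin 2 ⊕ Fin 2) ℝ := Matrix.fromBlocks 0 1 (-1) 0

/-- The matrix `η = [[0,I₄],[I₄,0]]` of the natural inner product on `𝕋M`. -/
def ηm : Matrix ((Fin 2 ⊕ Fin 2) ⊕ (Fin 2 ⊕ Fin 2)) ((Fin 2 ⊕ Fin 2) ⊕ (Fin 2 ⊕ Fin 2)) ℝ :=
  Matrix.fromBlocks 0 1 1 0

lemma A2_sq : A2 * A2 = -1 := by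
  ext i j; fin_cases i <;> fin_cases j <;>
    simp [A2, Matrix.mul_apply, Fin.sum_univ_succ, Matrix.one_apply]

lemma A2_t : A2ᵀ = -A2 := by
  ext i j; fin_cases i <;> fin_cases j <;> simp [A2]

lemma ρ_sq : ρm * ρm = -1 := by
  simp [ρm, Matrix.fromBlocks_multiply, A2_sq] <;> ext (i|i) (j|j) <;> simp [Matrix.one_apply]

lemma α_sq : αm * αm = -1 := by
  simp [αm, Matrix.fromBlocks_multiply, A2_sq] <;> ext (i|i) (j|j) <;> simp [Matrix.one_apply]

lemma Ω_sq : Ωm * Ωm = -1 := by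
  simp [Ωm, Matrix.fromBlocks_multiply] <;> ext (i|i) (j|j) <;> simp [Matrix.one_apply]

lemma ρα : ρm * αm = Ωm := by
  simp [ρm, αm, Ωm, Matrix.fromBlocks_multiply, A2_sq] <;> ext (i|i) (j|j) <;> simp [Matrix.one_apply]

lemma αρ : αm * ρm = -Ωm := by
  simp [ρm, αm, Ωm, Matrix.fromBlocks_multiply, A2_sq] <;> ext (i|i) (j|j) <;> simp [Matrix.one_apply]

lemma ρΩ : ρm * Ωm = -αm := by
  simp [ρm, αm, Ωm, Matrix.fromBlocks_multiply] <;> ext (i|i) (j|j) <;> simp [Matrix.one_apply]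

lemma Ωρ : Ωm * ρm = αm := by
  simp [ρm, αm, Ωm, Matrix.fromBlocks_multiply] <;> ext (i|i) (j|j) <;> simp [Matrix.one_apply]

lemma αΩ : αm * Ωm = ρm := by
  simp [ρm, αm, Ωm, Matrix.fromBlocks_multiply] <;> ext (i|i) (j|j) <;> simp [Matrix.one_apply]

lemma Ωα : Ωm * αm = -ρm := by
  simp [ρm, αm, Ωm, Matrix.fromBlocks_multiply] <;> ext (i|i) (j|j) <;> simp [Matrix.one_apply]

lemma ρ_t : ρm.transpose = -ρm := by
  simp [ρm, Matrix.fromBlocks_transpose, A2_t] <;> ext (i|i) (j|j) <;> simp [Matrix.one_apply]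

lemma α_t : αm.transpose = -αm := by
  simp [αm, Matrix.fromBlocks_transpose, A2_t] <;> ext (i|i) (j|j) <;> simp [Matrix.one_apply]

lemma Ω_t : Ωm.transpose = -Ωm := by
  simp [Ωm, Matrix.fromBlocks_transpose] <;> ext (i|i) (j|j) <;> simp [Matrix.one_apply]

/-- There is a 2-sphere of generalized almost complex structures in the real span of
`{J₁, J₂, J₃}` (all sign parameters `= 1`): for `a₁² + a₂² + a₃² = 1`, the combination
`𝔸 = a₁J₁ + a₂J₂ + a₃J₃` satisfies `𝔸² = −I₈` and `𝔸ᵀ η 𝔸 = η`. -/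
theorem sphere_of_GaC (a₁ a₂ a₃ : ℝ) (h : a₁ ^ 2 + a₂ ^ 2 + a₃ ^ 2 = 1)
    (J₁ J₂ J₃ 𝔸 : Matrix ((Fin 2 ⊕ Fin 2) ⊕ (Fin 2 ⊕ Fin 2)) ((Fin 2 ⊕ Fin 2) ⊕ (Fin 2 ⊕ Fin 2)) ℝ)
    (hJ₁ : J₁ = Matrix.fromBlocks ρm 0 0 ρm)
    (hJ₂ : J₂ = Matrix.fromBlocks 0 αm αm 0)
    (hJ₃ : J₃ = Matrix.fromBlocks 0 Ωm Ωm 0)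
    (h𝔸 : 𝔸 = a₁ • J₁ + a₂ • J₂ + a₃ • J₃) :
    𝔸 * 𝔸 = -1 ∧ 𝔸ᵀ * ηm * 𝔸 = ηm := by
  have e11 : J₁ * J₁ = -1 := by
    simp [hJ₁, Matrix.fromBlocks_multiply, ρ_sq] <;> ext (i|i) (j|j) <;> simp [Matrix.one_apply]
  have e22 : J₂ * J₂ = -1 := by
    simp [hJ₂, Matrix.fromBlocks_multiply, α_sq] <;> ext (i|i) (j|j) <;> simp [Matrix.one_apply]
  have e33 : J₃ * J₃ = -1 := by
    simp [hJ₃, Matrix.fromBlocks_multiply, Ω_sq] <;> ext (i|i) (j|j) <;> simp [Matrix.one_apply]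
  have e12 : J₁ * J₂ + J₂ * J₁ = 0 := by
    simp [hJ₁, hJ₂, Matrix.fromBlocks_multiply, ρα, αρ] <;> ext (i|i) (j|j) <;> simp [Matrix.one_apply]
  have e13 : J₁ * J₃ + J₃ * J₁ = 0 := by
    simp [hJ₁, hJ₃, Matrix.fromBlocks_multiply, ρΩ, Ωρ] <;> ext (i|i) (j|j) <;> simp [Matrix.one_apply]
  have e23 : J₂ * J₃ + J₃ * J₂ = 0 := by
    simp [hJ₂, hJ₃, Matrix.fromBlocks_multiply, αΩ, Ωα] <;> ext (i|i) (j|j) <;> simp [Matrix.one_apply]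
  have hsq : 𝔸 * 𝔸 = -1 := by
    have expand : 𝔸 * 𝔸 =
        (a₁ * a₁) • (J₁ * J₁) + (a₂ * a₂) • (J₂ * J₂) + (a₃ * a₃) • (J₃ * J₃)
        + (a₁ * a₂) • (J₁ * J₂ + J₂ * J₁) + (a₁ * a₃) • (J₁ * J₃ + J₃ * J₁)
        + (a₂ * a₃) • (J₂ * J₃ + J₃ * J₂) := by
      rw [h𝔸]
      simp only [Matrix.add_mul, Matrix.mul_add, Matrix.smul_mul, Matrix.mul_smul,
        smul_add, smul_smul]
      module
    rw [expand, e11, e22, e33, e12, e13, e23]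
    have h1 : (a₁ * a₁ + a₂ * a₂ + a₃ * a₃) = 1 := by nlinarith
    calc (a₁*a₁) • (-1 : Matrix _ _ ℝ) + (a₂*a₂) • (-1 : Matrix _ _ ℝ)
          + (a₃*a₃) • (-1 : Matrix _ _ ℝ) + (a₁*a₂) • (0 : Matrix _ _ ℝ)
          + (a₁*a₃) • (0 : Matrix _ _ ℝ) + (a₂*a₃) • (0 : Matrix _ _ ℝ)
        = (a₁*a₁ + a₂*a₂ + a₃*a₃) • (-1 : Matrix _ _ ℝ) := by module
      _ = -1 := by rw [h1, one_smul]
  have ht : 𝔸ᵀ = -𝔸 := by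
    have t1 : J₁ᵀ = -J₁ := by
      simp [hJ₁, Matrix.fromBlocks_transpose, ρ_t] <;> ext (i|i) (j|j) <;> simp [Matrix.one_apply]
    have t2 : J₂ᵀ = -J₂ := by
      simp [hJ₂, Matrix.fromBlocks_transpose, α_t] <;> ext (i|i) (j|j) <;> simp [Matrix.one_apply]
    have t3 : J₃ᵀ = -J₃ := by
      simp [hJ₃, Matrix.fromBlocks_transpose, Ω_t] <;> ext (i|i) (j|j) <;> simp [Matrix.one_apply]
    rw [h𝔸]; simp [Matrix.transpose_add, Matrix.transpose_smul, t1, t2, t3]; module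
  have hcomm : ηm * 𝔸 = 𝔸 * ηm := by
    have c1 : ηm * J₁ = J₁ * ηm := by
      simp [ηm, hJ₁, Matrix.fromBlocks_multiply]
    have c2 : ηm * J₂ = J₂ * ηm := by
      simp [ηm, hJ₂, Matrix.fromBlocks_multiply]
    have c3 : ηm * J₃ = J₃ * ηm := by
      simp [ηm, hJ₃, Matrix.fromBlocks_multiply]
    rw [h𝔸]
    simp only [Matrix.mul_add, Matrix.add_mul, Matrix.mul_smul, Matrix.smul_mul,
      c1, c2, c3]
  refine ⟨hsq, ?_⟩
  calc 𝔸ᵀ * ηm * 𝔸 = (-𝔸) * ηm * 𝔸 := by rw [ht]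
    _ = -(𝔸 * ηm * 𝔸) := by simp [Matrix.neg_mul]
    _ = -(ηm * 𝔸 * 𝔸) := by rw [hcomm]
    _ = -(ηm * (𝔸 * 𝔸)) := by rw [Matrix.mul_assoc]
    _ = ηm := by rw [hsq]; simp
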